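/- Let N ≥ 1 and let μ and ν be finite Borel measures on the unit sphere S^{N-1} of Euclidean space ℝ^N such that ∫_{S^{N-1}} p dμ ≥ ∫_{S^{N-1}} p dν for every sublinear functional p : ℝ^N → ℝ. Then μ linearly majorizes ν. (Converse of Reshetnyak's theorem.) -/

import Mathlib

open MeasureTheory

/-- The unit sphere `S^{N-1}` of Euclidean space `ℝ^N`. -/
abbrev UnitSphere (N : ℕ) : Set (EuclideanSpace ℝ (Fin N)) :=
  Metric.sphere (0 : EuclideanSpace ℝ (Fin N)) 1

/-- `LinMaj N μ ν` : the measure `μ` linearly majorizes the measure `ν` on the unit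
sphere `S^{N-1}`, i.e. for every decomposition of the sphere into finitely many pairwise
disjoint Borel sets `U 1, …, U m` there are finite Borel measures `μ 1, …, μ m` summing
to `μ` such that for every `k` and every continuous linear functional `ℓ` on `ℝ^N`,
`∫ ℓ dμ_k = ∫_{U k} ℓ dν`. -/
def LinMaj (N : ℕ) (μ ν : Measure (UnitSphere N)) : Prop :=
  ∀ (m : ℕ) (U : Fin m → Set (UnitSphere N)),
    (∀ k, MeasurableSet (U k)) →
    (Pairwise fun i j => Disjoint (U i) (U j)) →
    (⋃ k, U k) = Set.univ →
    ∃ μk : Fin m → Measure (UnitSphere N),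
      (∀ k, IsFiniteMeasure (μk k)) ∧
      μ = ∑ k, μk k ∧
      ∀ (k : Fin m) (ℓ : EuclideanSpace ℝ (Fin N) →L[ℝ] ℝ),
        ∫ z, ℓ (z : EuclideanSpace ℝ (Fin N)) ∂(μk k)
          = ∫ z in U k, ℓ (z : EuclideanSpace ℝ (Fin N)) ∂ν

/-!
Splittings `μ = ∑ k, μ k` with `μ k = h k • μ`, viewed as tuples of functionals on `L²(μ)`, form a
weak-* compact convex set, so the tuples of first moments `(∫ x dμ k)_k` they produce form a
compact convex subset `K` of `E^m`. If the target `(∫_{U k} x dν)_k` were outside `K`, a functional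
`y ↦ ∑ k, ℓ k (y k)` would separate it from `K`. For the sublinear `p = max_k ℓ k`, splitting `μ`
along the sets where `ℓ k` attains the maximum then gives
`∫ p dμ < ∑ k, ∫_{U k} ℓ k dν ≤ ∫ p dν`, contradicting the hypothesis.
-/

open Set

section MaxOfFunctionals

variable {ι E : Type*} [Fintype ι] [Nonempty ι] [TopologicalSpace E] [AddCommGroup E]
  [Module ℝ E]

noncomputable def maxOfFunctionals (ℓ : ι → E →L[ℝ] ℝ) (x : E) : ℝ :=
  Finset.univ.sup' Finset.univ_nonempty fun k => ℓ k x

variable (ℓ : ι → E →L[ℝ] ℝ)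

lemma le_maxOfFunctionals (k : ι) (x : E) : ℓ k x ≤ maxOfFunctionals ℓ x :=
  Finset.le_sup' (fun k => ℓ k x) (Finset.mem_univ k)

lemma exists_eq_maxOfFunctionals (x : E) : ∃ k, ℓ k x = maxOfFunctionals ℓ x := by
  obtain ⟨k, -, hk⟩ := Finset.exists_mem_eq_sup' Finset.univ_nonempty fun k => ℓ k x
  exact ⟨k, hk.symm⟩

lemma maxOfFunctionals_add_le (x y : E) :
    maxOfFunctionals ℓ (x + y) ≤ maxOfFunctionals ℓ x + maxOfFunctionals ℓ y :=
  Finset.sup'_le _ _ fun k _ => by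
    rw [map_add]
    exact add_le_add (le_maxOfFunctionals ℓ k x) (le_maxOfFunctionals ℓ k y)

lemma maxOfFunctionals_smul {t : ℝ} (ht : 0 ≤ t) (x : E) :
    maxOfFunctionals ℓ (t • x) = t * maxOfFunctionals ℓ x := by
  simp only [maxOfFunctionals, map_smul, smul_eq_mul]
  exact (Finset.apply_sup'_eq_sup'_comp _ (t * ·) fun a b => mul_max_of_nonneg a b ht).symm

lemma continuous_maxOfFunctionals : Continuous (maxOfFunctionals ℓ) :=
  Continuous.finset_sup'_apply _ fun k _ => (ℓ k).continuous

end MaxOfFunctionals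

section Partition

variable {α ι : Type*} [MeasurableSpace α] [Fintype ι]

structure IsMeasurablePartition (A : ι → Set α) : Prop where
  measurableSet : ∀ k, MeasurableSet (A k)
  pairwise_disjoint : Pairwise fun i j => Disjoint (A i) (A j)
  iUnion_eq_univ : ⋃ k, A k = univ

lemma exists_isMeasurablePartition_subset {Q : ι → Set α} (hQ : ∀ k, MeasurableSet (Q k))
    (hcover : ⋃ k, Q k = univ) : ∃ A, IsMeasurablePartition A ∧ ∀ k, A k ⊆ Q k := by
  obtain ⟨A, hAQ, hsup, hdisj⟩ :=
    Fintype.exists_disjointed_le fun k => (⟨Q k, hQ k⟩ : {s : Set α // MeasurableSet s})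
  have hcoe (B : ι → {s : Set α // MeasurableSet s}) :
      ((Finset.univ.sup B : {s : Set α // MeasurableSet s}) : Set α) = ⋃ k, (B k : Set α) := by
    rw [Finset.apply_sup_eq_sup_comp Subtype.val (fun _ _ => rfl) rfl, Finset.sup_set_eq_biUnion]
    simp
  refine ⟨fun k => A k, ⟨fun k => (A k).2, fun i j hij => ?_, ?_⟩, hAQ⟩
  · exact Set.disjoint_iff_inter_eq_empty.mpr <| congrArg Subtype.val (disjoint_iff.mp (hdisj hij))
  · rw [← hcoe, hsup, hcoe]
    exact hcover

lemma IsMeasurablePartition.integral_eq_sum {E : Type*} [NormedAddCommGroup E] [NormedSpace ℝ E]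
    {μ : Measure α} {A : ι → Set α} (hA : IsMeasurablePartition A) {f : α → E}
    (hf : Integrable f μ) : ∫ z, f z ∂μ = ∑ k, ∫ z in A k, f z ∂μ := by
  rw [← setIntegral_univ, ← hA.iUnion_eq_univ,
    integral_iUnion_fintype hA.measurableSet hA.pairwise_disjoint fun k => hf.integrableOn]

end Partition

lemma Continuous.integrable_of_compactSpace {S F : Type*} [TopologicalSpace S] [CompactSpace S]
    [MeasurableSpace S] [OpensMeasurableSpace S] [NormedAddCommGroup F] {μ : Measure S}
    [IsFiniteMeasure μ] {f : S → F} (hf : Continuous f) : Integrable f μ :=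
  integrableOn_univ.mp (hf.continuousOn.integrableOn_compact' isCompact_univ MeasurableSet.univ)

section MaxIntegral

variable {S E ι : Type*} [TopologicalSpace S] [CompactSpace S] [MeasurableSpace S]
  [OpensMeasurableSpace S] [TopologicalSpace E] [AddCommGroup E] [Module ℝ E]
  [Fintype ι] [Nonempty ι] (μ : Measure S) [IsFiniteMeasure μ] (ℓ : ι → E →L[ℝ] ℝ) (x : C(S, E))

lemma sum_setIntegral_le_integral_maxOfFunctionals {U : ι → Set S} (hU : IsMeasurablePartition U) :
    ∑ k, ∫ z in U k, ℓ k (x z) ∂μ ≤ ∫ z, maxOfFunctionals ℓ (x z) ∂μ := by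
  have hmax : Integrable (fun z => maxOfFunctionals ℓ (x z)) μ :=
    ((continuous_maxOfFunctionals ℓ).comp x.continuous).integrable_of_compactSpace
  rw [hU.integral_eq_sum hmax]
  exact Finset.sum_le_sum fun k _ => setIntegral_mono_on
    (((ℓ k).continuous.comp x.continuous).integrable_of_compactSpace.integrableOn)
    hmax.integrableOn (hU.measurableSet k) fun z _ => le_maxOfFunctionals ℓ k (x z)

lemma exists_isMeasurablePartition_integral_maxOfFunctionals_eq :
    ∃ A : ι → Set S, IsMeasurablePartition A ∧
      ∫ z, maxOfFunctionals ℓ (x z) ∂μ = ∑ k, ∫ z in A k, ℓ k (x z) ∂μ := by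
  have hcont : Continuous fun z => maxOfFunctionals ℓ (x z) :=
    (continuous_maxOfFunctionals ℓ).comp x.continuous
  obtain ⟨A, hA, hAQ⟩ := exists_isMeasurablePartition_subset
    (Q := fun k => {z | ℓ k (x z) = maxOfFunctionals ℓ (x z)})
    (fun k => (isClosed_eq ((ℓ k).continuous.comp x.continuous) hcont).measurableSet)
    (iUnion_eq_univ_iff.mpr fun z => exists_eq_maxOfFunctionals ℓ (x z))
  refine ⟨A, hA, ?_⟩
  rw [hA.integral_eq_sum hcont.integrable_of_compactSpace]
  exact Finset.sum_congr rfl fun k _ =>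
    setIntegral_congr_fun (hA.measurableSet k) fun z hz => (hAQ k hz).symm

end MaxIntegral

section DualPartitionsOfUnity

variable {S : Type*} [MeasurableSpace S] (μ : Measure S) (ι : Type*) [Fintype ι]

/-- A splitting `μ = ∑ k, h k • μ` with `0 ≤ h k`, `∑ k, h k = 1` is seen as the tuple of
functionals `g ↦ ∫ h k * g dμ` on `L²(μ)`. The norm bound, automatic for such tuples, makes the
set weak-* compact by Banach–Alaoglu. -/
def dualPartitionsOfUnity : Set (ι → WeakDual ℝ (Lp ℝ 2 μ)) :=
  {φ | (∀ k (g : Lp ℝ 2 μ), 0 ≤ᵐ[μ] g → 0 ≤ φ k g) ∧ (∀ g : Lp ℝ 2 μ, ∑ k, φ k g = ∫ z, g z ∂μ) ∧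
    ∀ k, ‖WeakDual.toStrongDual (φ k)‖ ≤ μ.real univ ^ (1 / 2 : ℝ)}

lemma isClosed_dualPartitionsOfUnity : IsClosed (dualPartitionsOfUnity μ ι) := by
  have heval (k : ι) (g : Lp ℝ 2 μ) : Continuous fun φ : ι → WeakDual ℝ (Lp ℝ 2 μ) => φ k g :=
    (WeakDual.eval_continuous g).comp (continuous_apply k)
  simp only [dualPartitionsOfUnity, ofPred_and, ofPred_forall, ← mem_closedBall_zero_iff]
  refine .inter ?_ (.inter ?_ ?_)
  · exact isClosed_iInter fun k => isClosed_iInter fun g => isClosed_iInter fun _ =>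
      isClosed_le continuous_const (heval k g)
  · exact isClosed_iInter fun g =>
      isClosed_eq (continuous_finsetSum _ fun k _ => heval k g) continuous_const
  · exact isClosed_iInter fun k =>
      (WeakDual.isClosed_closedBall 0 _).preimage (continuous_apply k)

lemma isCompact_dualPartitionsOfUnity : IsCompact (dualPartitionsOfUnity μ ι) :=
  (isCompact_univ_pi fun _ => WeakDual.isCompact_closedBall 0 _).of_isClosed_subset
    (isClosed_dualPartitionsOfUnity μ ι) fun _ hφ k _ => mem_closedBall_zero_iff.mpr (hφ.2.2 k)

lemma convex_dualPartitionsOfUnity : Convex ℝ (dualPartitionsOfUnity μ ι) := by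
  rintro φ ⟨hφ₀, hφ₁, hφ₂⟩ ψ ⟨hψ₀, hψ₁, hψ₂⟩ a b ha hb hab
  refine ⟨fun k g hg => ?_, fun g => ?_, fun k => ?_⟩
  · exact add_nonneg (mul_nonneg ha (hφ₀ k g hg)) (mul_nonneg hb (hψ₀ k g hg))
  · change ∑ k, (a * φ k g + b * ψ k g) = _
    rw [Finset.sum_add_distrib, ← Finset.mul_sum, ← Finset.mul_sum, hφ₁, hψ₁, ← add_mul, hab,
      one_mul]
  · rw [show WeakDual.toStrongDual ((a • φ + b • ψ) k)
        = a • WeakDual.toStrongDual (φ k) + b • WeakDual.toStrongDual (ψ k) from rfl]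
    calc ‖a • WeakDual.toStrongDual (φ k) + b • WeakDual.toStrongDual (ψ k)‖
        ≤ a * μ.real univ ^ (1 / 2 : ℝ) + b * μ.real univ ^ (1 / 2 : ℝ) := by
          refine (norm_add_le _ _).trans (add_le_add ?_ ?_)
          · rw [norm_smul, Real.norm_of_nonneg ha]
            exact mul_le_mul_of_nonneg_left (hφ₂ k) ha
          · rw [norm_smul, Real.norm_of_nonneg hb]
            exact mul_le_mul_of_nonneg_left (hψ₂ k) hb
      _ = μ.real univ ^ (1 / 2 : ℝ) := by rw [← add_mul, hab, one_mul]

variable {μ ι} [IsFiniteMeasure μ]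

noncomputable def setIntegralDual {s : Set S} (hs : MeasurableSet s) : WeakDual ℝ (Lp ℝ 2 μ) :=
  StrongDual.toWeakDual (innerSL ℝ (indicatorConstLp 2 hs (measure_ne_top μ s) (1 : ℝ)))

lemma setIntegralDual_apply {s : Set S} (hs : MeasurableSet s) (g : Lp ℝ 2 μ) :
    setIntegralDual hs g = ∫ z in s, g z ∂μ :=
  L2.inner_indicatorConstLp_one hs _ g

lemma setIntegralDual_mem_dualPartitionsOfUnity {A : ι → Set S} (hA : IsMeasurablePartition A) :
    (fun k => setIntegralDual (μ := μ) (hA.measurableSet k) :) ∈ dualPartitionsOfUnity μ ι := by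
  refine ⟨fun k g hg => ?_, fun g => ?_, fun k => ?_⟩
  · rw [setIntegralDual_apply]
    exact integral_nonneg_of_ae (ae_restrict_of_ae hg)
  · simp only [setIntegralDual_apply]
    exact (hA.integral_eq_sum (Lp.memLp g |>.integrable one_le_two)).symm
  · change ‖innerSL ℝ _‖ ≤ _
    rw [innerSL_apply_norm, norm_indicatorConstLp two_ne_zero ENNReal.ofNat_ne_top, norm_one,
      one_mul, ENNReal.toReal_ofNat]
    gcongr
    · exact measure_ne_top μ _
    · exact subset_univ _

end DualPartitionsOfUnity

section Densities

variable {S ι : Type*} [MeasurableSpace S] {μ : Measure S} [IsFiniteMeasure μ] [Fintype ι]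

lemma indicatorConstLp_one_nonneg {s : Set S} (hs : MeasurableSet s) :
    0 ≤ᵐ[μ] indicatorConstLp 2 hs (measure_ne_top μ s) (1 : ℝ) := by
  filter_upwards [indicatorConstLp_coeFn (p := 2) (hs := hs) (hμs := measure_ne_top μ s)
    (c := (1 : ℝ))] with z hz
  rw [Pi.zero_apply, hz]
  exact indicator_nonneg (fun _ _ => zero_le_one) z

/-- The Riesz representatives of the functionals `φ k` are densities of measures splitting `μ`. -/
theorem exists_measures_of_mem_dualPartitionsOfUnity {φ : ι → WeakDual ℝ (Lp ℝ 2 μ)}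
    (hφ : φ ∈ dualPartitionsOfUnity μ ι) :
    ∃ μk : ι → Measure S, (∀ k, IsFiniteMeasure (μk k)) ∧ μ = ∑ k, μk k ∧
      ∀ k (g : S → ℝ) (hg : MemLp g 2 μ), ∫ z, g z ∂μk k = φ k (hg.toLp g) := by
  set f : ι → Lp ℝ 2 μ :=
    fun k => (InnerProductSpace.toDual ℝ _).symm (WeakDual.toStrongDual (φ k))
  have hf_inner (k : ι) (g : Lp ℝ 2 μ) : inner ℝ (f k) g = φ k g :=
    InnerProductSpace.toDual_symm_apply
  have hf_int (k : ι) : Integrable (f k) μ := (Lp.memLp (f k)).integrable one_le_two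
  have hf_setIntegral (k : ι) {s : Set S} (hs : MeasurableSet s) :
      ∫ z in s, f k z ∂μ = φ k (indicatorConstLp 2 hs (measure_ne_top μ s) 1) := by
    rw [← L2.inner_indicatorConstLp_one, real_inner_comm, hf_inner]
  have hf_nonneg (k : ι) : 0 ≤ᵐ[μ] f k :=
    ae_nonneg_of_forall_setIntegral_nonneg (hf_int k) fun s hs _ =>
      hf_setIntegral k hs ▸ hφ.1 k _ (indicatorConstLp_one_nonneg hs)
  set μk : ι → Measure S := fun k => μ.withDensity fun z => ENNReal.ofReal (f k z)
  have hμk_apply (k : ι) {s : Set S} (hs : MeasurableSet s) :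
      μk k s = ENNReal.ofReal (φ k (indicatorConstLp 2 hs (measure_ne_top μ s) 1)) := by
    rw [withDensity_apply _ hs, ← hf_setIntegral k hs,
      ofReal_integral_eq_lintegral_ofReal (hf_int k).integrableOn (ae_restrict_of_ae (hf_nonneg k))]
  refine ⟨μk, fun k => isFiniteMeasure_withDensity_ofReal (hf_int k).2, ?_, fun k g hg => ?_⟩
  · ext s hs
    have hχ := indicatorConstLp_one_nonneg (μ := μ) hs
    rw [Measure.coe_finsetSum, Finset.sum_apply, Finset.sum_congr rfl fun k _ => hμk_apply k hs,
      ← ENNReal.ofReal_sum_of_nonneg fun k _ => hφ.1 k _ hχ, hφ.2.1, integral_indicatorConstLp,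
      smul_eq_mul, mul_one, ofReal_measureReal]
  · rw [integral_withDensity_eq_integral_toReal_smul
      (Lp.stronglyMeasurable (f k)).measurable.ennreal_ofReal
      (ae_of_all _ fun _ => ENNReal.ofReal_lt_top), ← hf_inner, L2.inner_def]
    refine integral_congr_ae ?_
    filter_upwards [hf_nonneg k, hg.coeFn_toLp] with z hz hgz
    rw [hgz, ENNReal.toReal_ofReal hz, smul_eq_mul, real_inner_eq_re_inner, RCLike.inner_apply,
      conj_trivial, RCLike.re_to_real, mul_comm]

end Densities

section Moment

variable {S E : Type*} [TopologicalSpace S] [CompactSpace S] [MeasurableSpace S] [BorelSpace S]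
  (μ : Measure S) [IsFiniteMeasure μ] [NormedAddCommGroup E] [NormedSpace ℝ E] (x : C(S, E))

noncomputable def compL2 (ℓ : E →L[ℝ] ℝ) : Lp ℝ 2 μ :=
  ContinuousMap.toLp 2 μ ℝ ((ℓ : C(E, ℝ)).comp x)

lemma coeFn_compL2 (ℓ : E →L[ℝ] ℝ) : compL2 μ x ℓ =ᵐ[μ] fun z => ℓ (x z) :=
  ContinuousMap.coeFn_toLp μ _

variable [FiniteDimensional ℝ E]

/-- Written in a basis of `E`, but characterized by `ℓ (moment μ x ψ) = ψ (ℓ ∘ x)` (`apply_moment`);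
for `ψ = ∫_s · dμ` it is the first moment `∫_s x dμ` (`moment_setIntegralDual`). -/
noncomputable def moment : WeakDual ℝ (Lp ℝ 2 μ) →L[ℝ] E where
  toFun ψ := ∑ i, ψ (compL2 μ x (LinearMap.toContinuousLinearMap ((Module.finBasis ℝ E).coord i)))
    • Module.finBasis ℝ E i
  map_add' ψ ψ' := by rw [← Finset.sum_add_distrib]; simp only [← add_smul]; rfl
  map_smul' c ψ := by simp only [RingHom.id_apply, Finset.smul_sum, smul_smul]; rfl
  cont := continuous_finsetSum _ fun i _ => (WeakDual.eval_continuous _).smul continuous_const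

lemma apply_moment (ℓ : E →L[ℝ] ℝ) (ψ : WeakDual ℝ (Lp ℝ 2 μ)) :
    ℓ (moment μ x ψ) = ψ (compL2 μ x ℓ) := by
  set b := Module.finBasis ℝ E
  have hℓ : ℓ = ∑ i, ℓ (b i) • LinearMap.toContinuousLinearMap (b.coord i) := by
    ext y
    simp only [FunLike.coe_sum, Finset.sum_apply, FunLike.coe_smul,
      Pi.smul_apply, LinearMap.coe_toContinuousLinearMap', Module.Basis.coord_apply, smul_eq_mul]
    conv_lhs => rw [← b.sum_repr y]
    simp only [map_sum, map_smul, smul_eq_mul, mul_comm]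
  have hlift : compL2 μ x ℓ =
      ∑ i, ℓ (b i) • compL2 μ x (LinearMap.toContinuousLinearMap (b.coord i)) := by
    conv_lhs => rw [hℓ]
    simp only [compL2, ← map_smul, ← map_sum]
    congr 1
    ext z
    simp
  simp [moment, hlift, mul_comm, b]

variable {μ} in
lemma moment_setIntegralDual {s : Set S} (hs : MeasurableSet s) :
    moment μ x (setIntegralDual hs) = ∫ z in s, x z ∂μ := by
  refine (SeparatingDual.eq_iff_forall_dual_eq (R := ℝ)).mpr fun ℓ => ?_
  rw [apply_moment, setIntegralDual_apply, ← ℓ.integral_comp_comm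
    x.continuous.integrable_of_compactSpace.integrableOn]
  exact integral_congr_ae (ae_restrict_of_ae (coeFn_compL2 μ x ℓ))

end Moment

section Decomposition

variable {S E ι : Type*} [TopologicalSpace S] [CompactSpace S] [MeasurableSpace S] [BorelSpace S]
  (μ ν : Measure S) [IsFiniteMeasure μ] [IsFiniteMeasure ν] [NormedAddCommGroup E]
  [NormedSpace ℝ E] [FiniteDimensional ℝ E] (x : C(S, E)) [Fintype ι] [Nonempty ι]

theorem exists_mem_dualPartitionsOfUnity_moment_eq
    (hmax : ∀ ℓ : ι → E →L[ℝ] ℝ,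
      ∫ z, maxOfFunctionals ℓ (x z) ∂ν ≤ ∫ z, maxOfFunctionals ℓ (x z) ∂μ)
    {U : ι → Set S} (hU : IsMeasurablePartition U) :
    ∃ φ ∈ dualPartitionsOfUnity μ ι, ∀ k, moment μ x (φ k) = ∫ z in U k, x z ∂ν := by
  classical
  set Φ : (ι → WeakDual ℝ (Lp ℝ 2 μ)) →L[ℝ] (ι → E) :=
    ContinuousLinearMap.pi fun k => (moment μ x).comp (ContinuousLinearMap.proj k)
  set b : ι → E := fun k => ∫ z in U k, x z ∂ν
  suffices b ∈ Φ '' dualPartitionsOfUnity μ ι by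
    obtain ⟨φ, hφ, hφb⟩ := this
    exact ⟨φ, hφ, congrFun hφb⟩
  by_contra hb
  obtain ⟨f, u, hfu, hub⟩ := geometric_hahn_banach_closed_point
    ((convex_dualPartitionsOfUnity μ ι).linear_image Φ.toLinearMap)
    ((isCompact_dualPartitionsOfUnity μ ι).image Φ.continuous).isClosed hb
  set ℓ : ι → E →L[ℝ] ℝ := fun k => f.comp (ContinuousLinearMap.single ℝ (fun _ => E) k)
  have hf (y : ι → E) : f y = ∑ k, ℓ k (y k) := by
    conv_lhs => rw [← Finset.univ_sum_single y]
    simp [ℓ]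
  have hf_moments (ρ : Measure S) [IsFiniteMeasure ρ] (A : ι → Set S) :
      f (fun k => ∫ z in A k, x z ∂ρ) = ∑ k, ∫ z in A k, ℓ k (x z) ∂ρ := by
    rw [hf]
    exact Finset.sum_congr rfl fun k _ =>
      ((ℓ k).integral_comp_comm x.continuous.integrable_of_compactSpace.integrableOn).symm
  obtain ⟨A, hA, hμA⟩ := exists_isMeasurablePartition_integral_maxOfFunctionals_eq μ ℓ x
  set φA : ι → WeakDual ℝ (Lp ℝ 2 μ) := fun k => setIntegralDual (hA.measurableSet k)
  have hΦA : Φ φA = fun k => ∫ z in A k, x z ∂μ :=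
    funext fun k => moment_setIntegralDual x (hA.measurableSet k)
  have hlt : f (Φ φA) < u := hfu _ ⟨φA, setIntegralDual_mem_dualPartitionsOfUnity hA, rfl⟩
  have : f b ≤ f (Φ φA) := calc
    f b = ∑ k, ∫ z in U k, ℓ k (x z) ∂ν := hf_moments ν U
    _ ≤ ∫ z, maxOfFunctionals ℓ (x z) ∂ν := sum_setIntegral_le_integral_maxOfFunctionals ν ℓ x hU
    _ ≤ ∫ z, maxOfFunctionals ℓ (x z) ∂μ := hmax ℓ
    _ = ∑ k, ∫ z in A k, ℓ k (x z) ∂μ := hμA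
    _ = f (Φ φA) := by rw [hΦA, hf_moments]
  linarith

theorem exists_measure_decomposition_of_integral_maxOfFunctionals_le
    (hmax : ∀ ℓ : ι → E →L[ℝ] ℝ,
      ∫ z, maxOfFunctionals ℓ (x z) ∂ν ≤ ∫ z, maxOfFunctionals ℓ (x z) ∂μ)
    {U : ι → Set S} (hU : IsMeasurablePartition U) :
    ∃ μk : ι → Measure S, (∀ k, IsFiniteMeasure (μk k)) ∧ μ = ∑ k, μk k ∧
      ∀ k (ℓ : E →L[ℝ] ℝ), ∫ z, ℓ (x z) ∂μk k = ∫ z in U k, ℓ (x z) ∂ν := by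
  obtain ⟨φ, hφ, hφU⟩ := exists_mem_dualPartitionsOfUnity_moment_eq μ ν x hmax hU
  obtain ⟨μk, hfin, hsum, hμk⟩ := exists_measures_of_mem_dualPartitionsOfUnity hφ
  refine ⟨μk, hfin, hsum, fun k ℓ => ?_⟩
  have hℓx : MemLp (fun z => ℓ (x z)) 2 μ := ContinuousMap.memLp μ ℝ ((ℓ : C(E, ℝ)).comp x)
  have hlift : hℓx.toLp _ = compL2 μ x ℓ :=
    Lp.ext (hℓx.coeFn_toLp.trans (coeFn_compL2 μ x ℓ).symm)
  rw [hμk k _ hℓx, hlift, ← apply_moment, hφU,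
    ℓ.integral_comp_comm x.continuous.integrable_of_compactSpace.integrableOn]

end Decomposition

theorem linMaj_of_reshetnyak {N : ℕ}
    (μ ν : Measure (UnitSphere N)) [IsFiniteMeasure μ] [IsFiniteMeasure ν]
    (hint : ∀ p : EuclideanSpace ℝ (Fin N) → ℝ,
      (∀ t : ℝ, 0 ≤ t → ∀ x, p (t • x) = t * p x) →
      (∀ x y, p (x + y) ≤ p x + p y) →
      ∫ z, p (z : EuclideanSpace ℝ (Fin N)) ∂ν
        ≤ ∫ z, p (z : EuclideanSpace ℝ (Fin N)) ∂μ) :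
    LinMaj N μ ν := by
  intro m U hUm hUd hUu
  rcases isEmpty_or_nonempty (Fin m) with hm | _
  · have : IsEmpty (UnitSphere N) := by
      rw [← univ_eq_empty_iff, ← hUu, iUnion_of_empty]
    exact ⟨0, fun _ => inferInstance, by simp [Measure.eq_zero_of_isEmpty μ], isEmptyElim⟩
  · exact exists_measure_decomposition_of_integral_maxOfFunctionals_le μ ν
      ⟨Subtype.val, continuous_subtype_val⟩
      (fun ℓ => hint _ (fun t ht y => maxOfFunctionals_smul ℓ ht y) (maxOfFunctionals_add_le ℓ))
      ⟨hUm, hUd, hUu⟩
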